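/- For real numbers a, b and κ > 0, if χ(a,b) = κ where χ is the Fischer-Burmeister function, then b > −κ and a = −κ(2b+κ)/(2(b+κ)). -/
import Mathlib


theorem fischer_burmeister_level_set (a b κ : ℝ) (hκ : 0 < κ)
    (h : Real.sqrt (a ^ 2 + b ^ 2) - a - b = κ) :
    b > -κ ∧ a = -(κ * (2 * b + κ)) / (2 * (b + κ)) := by
  have hs : Real.sqrt (a ^ 2 + b ^ 2) = a + b + κ := by linarith
  have h0 : (0:ℝ) ≤ a + b + κ := hs ▸ Real.sqrt_nonneg _
  have hsq : a ^ 2 + b ^ 2 = (a + b + κ) ^ 2 := by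
    rw [← hs, Real.sq_sqrt (by positivity)]
  have key : 2 * a * (b + κ) + κ * (2 * b + κ) = 0 := by nlinarith
  have hb : b + κ > 0 := by
    by_contra hc
    push_neg at hc
    have hne : b + κ ≠ 0 := by
      intro he
      nlinarith
    have hlt : b + κ < 0 := lt_of_le_of_ne hc hne
    have ha : a < 0 := by nlinarith
    nlinarith [sq_nonneg b]
  constructor
  · linarith
  · field_simp
    linarith [key]
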